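/- arXiv:2502.10351 — 3 statements merged into one kernel-verified Lean document; each statement's English description precedes it below -/
import Mathlib

section
/- The energy density W : M²_sym × ℝ → ℝ₊, W(ε,v) := (v²+η)(μ|ε_d|² + κ|ε_v⁺|²) + κ|ε_v⁻|², is of class C^{1,1}_loc, and there exist constants c, C > 0 such that for every v ∈ [0,1] and all symmetric 2×2 matrices ε₁, ε₂: (i) (∂_ε W(ε₁,v) − ∂_ε W(ε₂,v)) : (ε₁ − ε₂) ≥ c|ε₁ − ε₂|², and (ii) |∂_ε W(ε₁,v) − ∂_ε W(ε₂,v)| ≤ C|ε₁ − ε₂|. In particular, since ∂_ε W(0,v) = 0, it holds |∂_ε W(ε,v)| ≤ C|ε| for every symmetric 2×2 matrix ε. -/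
/-!
The derivative splits orthogonally into a deviatoric and a volumetric part,
`∂_ε W(ε,v) = 2(v²+η)μ ε_d + σ(tr ε) I` with `σ t = (v²+η)κ t⁺ - κ t⁻`. With `D = ε₁ - ε₂`
and `|D|² = |D_d|² + (tr D)²/2`, the deviatoric part contributes `2(v²+η)μ |D_d|²` to the
monotonicity pairing and `4(v²+η)²μ² |D_d|²` to `|∂_ε W(ε₁,v) - ∂_ε W(ε₂,v)|²`, while the
volumetric part only involves the piecewise linear `σ`, whose slopes lie between
`min(η,1)κ` and `(1+η)κ` when `v ∈ [0,1]`.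

For the regularity, `W` is a polynomial plus polynomial multiples of `(tr⁺ ε)²` and
`(tr⁻ ε)²`, and `t ↦ (t⁺)²` is `C¹` with the Lipschitz derivative `2t⁺`.
-/

open Filter Topology

noncomputable section

/-- Real `2 × 2` matrices (as functions); symmetric matrices are singled out by `IsSym`. -/
abbrev Mat : Type := Fin 2 → Fin 2 → ℝ

/-- Trace of a `2 × 2` matrix. -/
def mtrace (M : Mat) : ℝ := M 0 0 + M 1 1

/-- The identity matrix. -/
def idm : Mat := fun i j => if i = j then (1 : ℝ) else 0

/-- Deviatoric part `ε_d = ε - ½ tr(ε) I`. -/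
def dev (M : Mat) : Mat := fun i j => M i j - (mtrace M / 2) * idm i j

/-- Tensile volumetric part `ε_v⁺ = ½ tr⁺(ε) I`. -/
def volP (M : Mat) : Mat := fun i j => (max (mtrace M) 0 / 2) * idm i j

/-- Compressive volumetric part `ε_v⁻ = ½ tr⁻(ε) I`. -/
def volM (M : Mat) : Mat := fun i j => (max (-(mtrace M)) 0 / 2) * idm i j

/-- Squared Frobenius norm. -/
def frobSq (M : Mat) : ℝ := ∑ i, ∑ j, (M i j) ^ 2

/-- Frobenius norm `|ε|`. -/
def frobNorm (M : Mat) : ℝ := Real.sqrt (frobSq M)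

/-- Frobenius inner product `M : N`. -/
def matInner (M N : Mat) : ℝ := ∑ i, ∑ j, M i j * N i j

/-- `M` is symmetric. -/
def IsSym (M : Mat) : Prop := ∀ i j, M i j = M j i

/-- The energy density `W(ε,v) = (v² + η)(μ|ε_d|² + κ|ε_v⁺|²) + κ|ε_v⁻|²`. -/
def Wdens (μ κ η : ℝ) (M : Mat) (v : ℝ) : ℝ :=
  (v ^ 2 + η) * (μ * frobSq (dev M) + κ * frobSq (volP M)) + κ * frobSq (volM M)

/-- The derivative `∂_ε W(ε,v) = 2(v² + η)(μ ε_d + κ ε_v⁺) - 2κ ε_v⁻`. -/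
def DWdens (μ κ η : ℝ) (M : Mat) (v : ℝ) : Mat := fun i j =>
  2 * (v ^ 2 + η) * (μ * dev M i j + κ * volP M i j) - 2 * κ * volM M i j

lemma LocallyLipschitz.smul {𝕜 α F : Type*} [RCLike 𝕜] [PseudoEMetricSpace α]
    [NormedAddCommGroup F] [NormedSpace 𝕜 F] {f : α → 𝕜} {g : α → F}
    (hf : LocallyLipschitz f) (hg : LocallyLipschitz g) :
    LocallyLipschitz fun x => f x • g x :=
  (contDiff_smul (𝕜 := 𝕜) (𝕜' := 𝕜) (F := F) (n := 1)).locallyLipschitz.comp (hf.prodMk hg)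

lemma hasDerivAt_posPart_sq (t : ℝ) :
    HasDerivAt (fun s : ℝ => max s 0 ^ 2) (2 * max t 0) t := by
  rcases lt_trichotomy t 0 with ht | rfl | ht
  · have hzero : (fun s : ℝ => max s 0 ^ 2) =ᶠ[𝓝 t] fun _ => 0 := by
      filter_upwards [eventually_lt_nhds ht] with s hs
      simp [hs.le]
    simpa [max_eq_right ht.le] using (hasDerivAt_const t (0 : ℝ)).congr_of_eventuallyEq hzero
  · rw [hasDerivAt_iff_isLittleO_nhds_zero]
    refine (Asymptotics.IsBigO.of_bound 1 (Eventually.of_forall fun h => ?_)).trans_isLittleO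
      (Asymptotics.isLittleO_pow_id one_lt_two)
    rcases le_total h 0 with hh | hh <;> simp [hh, sq_nonneg]
  · have hsq : (fun s : ℝ => max s 0 ^ 2) =ᶠ[𝓝 t] fun s => s ^ 2 := by
      filter_upwards [eventually_gt_nhds ht] with s hs
      simp [hs.le]
    simpa [max_eq_left ht.le] using (hasDerivAt_pow 2 t).congr_of_eventuallyEq hsq

lemma contDiff_posPart_sq : ContDiff ℝ 1 fun s : ℝ => max s 0 ^ 2 := by
  rw [contDiff_one_iff_deriv]
  refine ⟨fun t => (hasDerivAt_posPart_sq t).differentiableAt, ?_⟩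
  rw [funext fun t => (hasDerivAt_posPart_sq t).deriv]
  fun_prop

section C11

variable {E : Type*} [NormedAddCommGroup E] [NormedSpace ℝ E] {f g T : E → ℝ}

def IsC11Loc (f : E → ℝ) : Prop := ContDiff ℝ 1 f ∧ LocallyLipschitz (fderiv ℝ f)

lemma IsC11Loc.of_contDiff (hf : ContDiff ℝ 2 f) : IsC11Loc f :=
  ⟨hf.of_le (by norm_num), (hf.fderiv_right (m := 1) le_rfl).locallyLipschitz⟩

lemma IsC11Loc.add (hf : IsC11Loc f) (hg : IsC11Loc g) : IsC11Loc fun x => f x + g x := by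
  refine ⟨hf.1.add hg.1, ?_⟩
  have hd : fderiv ℝ (fun x => f x + g x) = fun x => fderiv ℝ f x + fderiv ℝ g x := funext fun x =>
    fderiv_add (hf.1.differentiable one_ne_zero x) (hg.1.differentiable one_ne_zero x)
  rw [hd]
  exact hf.2.add hg.2

lemma IsC11Loc.mul (hf : IsC11Loc f) (hg : IsC11Loc g) : IsC11Loc fun x => f x * g x := by
  refine ⟨hf.1.mul hg.1, ?_⟩
  have hd : fderiv ℝ (fun x => f x * g x) = fun x => f x • fderiv ℝ g x + g x • fderiv ℝ f x :=
    funext fun x =>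
      fderiv_mul (hf.1.differentiable one_ne_zero x) (hg.1.differentiable one_ne_zero x)
  rw [hd]
  exact (hf.1.locallyLipschitz.smul hg.2).add (hg.1.locallyLipschitz.smul hf.2)

lemma IsC11Loc.posPart_sq_comp (hT : ContDiff ℝ 2 T) : IsC11Loc fun x => max (T x) 0 ^ 2 := by
  have hT1 : ContDiff ℝ 1 T := hT.of_le (by norm_num)
  refine ⟨contDiff_posPart_sq.comp hT1, ?_⟩
  have hd : fderiv ℝ (fun x => max (T x) 0 ^ 2) = fun x => (2 * max (T x) 0) • fderiv ℝ T x := by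
    funext x
    exact ((hasDerivAt_posPart_sq (T x)).comp_hasFDerivAt x
      (hT1.differentiable one_ne_zero x).hasFDerivAt).fderiv
  rw [hd]
  have hmax : LocallyLipschitz fun x => 2 * max (T x) 0 :=
    (LocallyLipschitz.const (2 : ℝ)).smul (hT1.locallyLipschitz.max_const 0)
  exact hmax.smul (IsC11Loc.of_contDiff hT).2

end C11

lemma Monotone.sub_mul_sub_nonneg {f : ℝ → ℝ} (hf : Monotone f) (s t : ℝ) :
    0 ≤ (f s - f t) * (s - t) := by
  rcases le_total s t with h | h
  · exact mul_nonneg_of_nonpos_of_nonpos (sub_nonpos.2 (hf h)) (sub_nonpos.2 h)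
  · exact mul_nonneg (sub_nonneg.2 (hf h)) (sub_nonneg.2 h)

def twoSlope (α β t : ℝ) : ℝ := α * max t 0 - β * max (-t) 0

section twoSlope

variable {α β : ℝ}

lemma twoSlope_monotone (hα : 0 ≤ α) (hβ : 0 ≤ β) : Monotone (twoSlope α β) := by
  intro s t h
  unfold twoSlope
  gcongr

lemma twoSlope_sub (α β α' β' s : ℝ) :
    twoSlope α β s - twoSlope α' β' s = twoSlope (α - α') (β - β') s := by
  unfold twoSlope
  ring

lemma twoSlope_self (m s : ℝ) : twoSlope m m s = m * s := by
  unfold twoSlope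
  linear_combination m * max_zero_sub_max_neg_zero_eq_self s

lemma twoSlope_strongMono (α β s t : ℝ) :
    min α β * (s - t) ^ 2 ≤ (twoSlope α β s - twoSlope α β t) * (s - t) := by
  -- `twoSlope α β - min α β • id` is a `twoSlope` with nonnegative slopes, hence monotone.
  have h := (twoSlope_monotone (sub_nonneg.2 (min_le_left α β))
    (sub_nonneg.2 (min_le_right α β))).sub_mul_sub_nonneg s t
  simp only [← twoSlope_sub, twoSlope_self] at h
  linarith

lemma abs_twoSlope_sub_le (hα : 0 ≤ α) (hβ : 0 ≤ β) (s t : ℝ) :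
    |twoSlope α β s - twoSlope α β t| ≤ max α β * |s - t| := by
  wlog hst : t ≤ s generalizing s t
  · rw [abs_sub_comm, abs_sub_comm s]
    exact this t s (le_of_not_ge hst)
  have hlow := twoSlope_monotone hα hβ hst
  -- likewise for `max α β • id - twoSlope α β`
  have hupp := twoSlope_monotone (sub_nonneg.2 (le_max_left α β))
    (sub_nonneg.2 (le_max_right α β)) hst
  simp only [← twoSlope_sub, twoSlope_self] at hupp
  rw [abs_of_nonneg (sub_nonneg.2 hlow), abs_of_nonneg (sub_nonneg.2 hst)]
  linarith

end twoSlope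

lemma frobSq_nonneg (M : Mat) : 0 ≤ frobSq M := by
  unfold frobSq
  positivity

lemma mtrace_sub (M N : Mat) : mtrace (M - N) = mtrace M - mtrace N := by
  simp only [mtrace, Pi.sub_apply]
  ring

lemma mtrace_add_smul (M H : Mat) (s : ℝ) : mtrace (M + s • H) = mtrace M + s * mtrace H := by
  simp only [mtrace, Pi.add_apply, Pi.smul_apply, smul_eq_mul]
  ring

lemma frobSq_add_smul (M H : Mat) (s : ℝ) :
    frobSq (M + s • H) = frobSq M + 2 * s * matInner M H + s ^ 2 * frobSq H := by
  simp only [frobSq, matInner, Fin.sum_univ_two, Pi.add_apply, Pi.smul_apply, smul_eq_mul]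
  ring

lemma frobSq_eq_frobSq_dev_add (M : Mat) : frobSq M = frobSq (dev M) + mtrace M ^ 2 / 2 := by
  simp only [frobSq, dev, mtrace, idm, Fin.sum_univ_two]
  norm_num
  ring

lemma Wdens_eq (μ κ η : ℝ) (M : Mat) (v : ℝ) :
    Wdens μ κ η M v = (v ^ 2 + η) * (μ * (frobSq M - mtrace M ^ 2 / 2)
      + κ / 2 * max (mtrace M) 0 ^ 2) + κ / 2 * max (-mtrace M) 0 ^ 2 := by
  rw [Wdens, frobSq_eq_frobSq_dev_add M]
  simp only [frobSq, volP, volM, idm, Fin.sum_univ_two]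
  norm_num
  ring

lemma isC11Loc_Wdens (μ κ η : ℝ) : IsC11Loc fun p : Mat × ℝ => Wdens μ κ η p.1 p.2 := by
  simp only [Wdens_eq]
  have hT : ContDiff ℝ 2 fun p : Mat × ℝ => mtrace p.1 := by
    unfold mtrace
    fun_prop
  have hE : ContDiff ℝ 2 fun p : Mat × ℝ => μ * (frobSq p.1 - mtrace p.1 ^ 2 / 2) := by
    unfold frobSq
    fun_prop
  have hc (c : ℝ) : IsC11Loc fun _ : Mat × ℝ => c := .of_contDiff contDiff_const
  exact ((IsC11Loc.of_contDiff (by fun_prop)).mul ((IsC11Loc.of_contDiff hE).add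
    ((hc _).mul (.posPart_sq_comp hT)))).add ((hc _).mul (.posPart_sq_comp hT.neg))

lemma matInner_DWdens (μ κ η : ℝ) (M H : Mat) (v : ℝ) :
    matInner (DWdens μ κ η M v) H = (v ^ 2 + η) * (μ * (2 * matInner M H - mtrace M * mtrace H)
      + κ * max (mtrace M) 0 * mtrace H) - κ * max (-mtrace M) 0 * mtrace H := by
  simp only [matInner, DWdens, dev, volP, volM, mtrace, idm, Fin.sum_univ_two]
  norm_num
  ring

lemma hasDerivAt_Wdens_add_smul (μ κ η : ℝ) (M H : Mat) (v : ℝ) :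
    HasDerivAt (fun s : ℝ => Wdens μ κ η (M + s • H) v) (matInner (DWdens μ κ η M v) H) 0 := by
  simp only [Wdens_eq, frobSq_add_smul, mtrace_add_smul]
  have hline : HasDerivAt (fun s : ℝ => mtrace M + s * mtrace H) (mtrace H) 0 := by
    simpa using ((hasDerivAt_id (0 : ℝ)).mul_const (mtrace H)).const_add (mtrace M)
  have hpos := (hasDerivAt_posPart_sq _).comp (0 : ℝ) hline
  have hneg := (hasDerivAt_posPart_sq _).comp (0 : ℝ) hline.neg
  have hquad := ((((hasDerivAt_id (0 : ℝ)).const_mul (2 * matInner M H)).const_add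
    (frobSq M)).add ((hasDerivAt_pow 2 (0 : ℝ)).const_mul (frobSq H))).sub
    ((hline.pow 2).div_const 2)
  have h := (((hquad.const_mul μ).add (hpos.const_mul (κ / 2))).const_mul (v ^ 2 + η)).add
    (hneg.const_mul (κ / 2))
  refine (h.congr_deriv ?_).congr_of_eventuallyEq (Eventually.of_forall fun s => ?_)
  · rw [matInner_DWdens]
    simp only [mul_one, Nat.cast_ofNat, Nat.add_one_sub_one, pow_one, mul_zero, add_zero, zero_mul,
      Pi.neg_apply, mul_neg]
    ring
  · simp only [Function.comp, Pi.add_apply, Pi.sub_apply, Pi.neg_apply, Pi.pow_apply, id]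
    ring

lemma DWdens_zero (μ κ η v : ℝ) : DWdens μ κ η 0 v = 0 := by
  funext i j
  simp [DWdens, dev, volP, volM, mtrace]

lemma DWdens_sub (μ κ η : ℝ) (M₁ M₂ : Mat) (v : ℝ) :
    DWdens μ κ η M₁ v - DWdens μ κ η M₂ v = (2 * (v ^ 2 + η) * μ) • dev (M₁ - M₂)
      + (twoSlope ((v ^ 2 + η) * κ) κ (mtrace M₁)
        - twoSlope ((v ^ 2 + η) * κ) κ (mtrace M₂)) • idm := by
  funext i j
  simp only [DWdens, dev, volP, volM, twoSlope, mtrace, Pi.add_apply, Pi.sub_apply, Pi.smul_apply,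
    smul_eq_mul]
  ring

lemma matInner_smul_dev_add_smul_idm (x y : ℝ) (D : Mat) :
    matInner (x • dev D + y • idm) D = x * frobSq (dev D) + y * mtrace D := by
  simp only [matInner, frobSq, dev, mtrace, idm, Fin.sum_univ_two, Pi.add_apply, Pi.smul_apply,
    smul_eq_mul]
  norm_num
  ring

lemma frobSq_smul_dev_add_smul_idm (x y : ℝ) (D : Mat) :
    frobSq (x • dev D + y • idm) = x ^ 2 * frobSq (dev D) + 2 * y ^ 2 := by
  simp only [frobSq, dev, mtrace, idm, Fin.sum_univ_two, Pi.add_apply, Pi.smul_apply, smul_eq_mul]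
  norm_num
  ring

section estimates

variable {μ κ η : ℝ}

lemma DWdens_strongMono (hμ : 0 ≤ μ) (hκ : 0 ≤ κ) (M₁ M₂ : Mat) (v : ℝ) :
    min (2 * η * μ) (2 * min η 1 * κ) * frobSq (M₁ - M₂) ≤
      matInner (DWdens μ κ η M₁ v - DWdens μ κ η M₂ v) (M₁ - M₂) := by
  rw [DWdens_sub, matInner_smul_dev_add_smul_idm, frobSq_eq_frobSq_dev_add, mtrace_sub]
  set a := v ^ 2 + η
  set d := mtrace M₁ - mtrace M₂
  have hX := frobSq_nonneg (dev (M₁ - M₂))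
  have hσ := twoSlope_strongMono (a * κ) κ (mtrace M₁) (mtrace M₂)
  have ha : η ≤ a := le_add_of_nonneg_left (sq_nonneg v)
  have hmin : min η 1 * κ ≤ min (a * κ) κ :=
    calc min η 1 * κ ≤ min a 1 * κ := mul_le_mul_of_nonneg_right (min_le_min_right 1 ha) hκ
      _ = min (a * κ) κ := by rw [min_mul_of_nonneg _ _ hκ, one_mul]
  nlinarith [mul_le_mul_of_nonneg_right (min_le_left (2 * η * μ) (2 * min η 1 * κ)) hX,
    mul_le_mul_of_nonneg_right (min_le_right (2 * η * μ) (2 * min η 1 * κ)) (sq_nonneg d),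
    mul_le_mul_of_nonneg_right hmin (sq_nonneg d), mul_le_mul_of_nonneg_right ha (mul_nonneg hμ hX)]

lemma frobSq_DWdens_sub_le (hμ : 0 ≤ μ) (hκ : 0 ≤ κ) (hη : 0 ≤ η) {v : ℝ} (hv : v ^ 2 ≤ 1)
    (M₁ M₂ : Mat) :
    frobSq (DWdens μ κ η M₁ v - DWdens μ κ η M₂ v) ≤
      (2 * (1 + η) * max μ κ) ^ 2 * frobSq (M₁ - M₂) := by
  rw [DWdens_sub, frobSq_smul_dev_add_smul_idm, frobSq_eq_frobSq_dev_add (M₁ - M₂), mtrace_sub]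
  set a := v ^ 2 + η
  set d := mtrace M₁ - mtrace M₂
  have hX := frobSq_nonneg (dev (M₁ - M₂))
  have ha₀ : 0 ≤ a := by positivity
  have ha₁ : a ≤ 1 + η := by linarith
  have hσ : |twoSlope (a * κ) κ (mtrace M₁) - twoSlope (a * κ) κ (mtrace M₂)| ≤ (1 + η) * κ * |d| :=
    (abs_twoSlope_sub_le (mul_nonneg ha₀ hκ) hκ _ _).trans (mul_le_mul_of_nonneg_right
      (max_le (mul_le_mul_of_nonneg_right ha₁ hκ) (le_mul_of_one_le_left hκ (by linarith)))
      (abs_nonneg d))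
  have hσ2 := pow_le_pow_left₀ (abs_nonneg _) hσ 2
  rw [sq_abs, mul_pow, sq_abs] at hσ2
  have hμ' : 2 * a * μ ≤ 2 * (1 + η) * max μ κ := by
    gcongr
    exact le_max_left μ κ
  have hκ' : (1 + η) * κ ≤ (1 + η) * max μ κ := by
    gcongr
    exact le_max_right μ κ
  nlinarith [mul_le_mul_of_nonneg_right (pow_le_pow_left₀ (by positivity) hμ' 2) hX,
    mul_le_mul_of_nonneg_right (pow_le_pow_left₀ (by positivity) hκ' 2) (sq_nonneg d)]

end estimates

lemma frobNorm_le_of_frobSq_le {A B : Mat} {C : ℝ} (hC : 0 ≤ C)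
    (h : frobSq A ≤ C ^ 2 * frobSq B) : frobNorm A ≤ C * frobNorm B :=
  calc frobNorm A ≤ √(C ^ 2 * frobSq B) := Real.sqrt_le_sqrt h
    _ = C * frobNorm B := by rw [Real.sqrt_mul (sq_nonneg C), Real.sqrt_sq hC, frobNorm]

/-- Lemma 3.1 of the paper.  The density `W : M²_sym × ℝ → ℝ₊` is of class
`C^{1,1}_loc`; `∂_ε W` is given by `DWdens` (in the directional sense); `∂_ε W(0,v) = 0`; and
there are constants `c, C > 0` such that for every `v ∈ [0,1]` and all symmetric `ε₁, ε₂`: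
(i) `(∂_ε W(ε₁,v) - ∂_ε W(ε₂,v)) : (ε₁ - ε₂) ≥ c |ε₁ - ε₂|²`;
(ii) `|∂_ε W(ε₁,v) - ∂_ε W(ε₂,v)| ≤ C |ε₁ - ε₂|`;
and consequently `|∂_ε W(ε,v)| ≤ C |ε|`. -/
theorem stmt0 (μ κ η : ℝ) (hμ : 0 < μ) (hκ : 0 < κ) (hη : 0 < η) :
    -- `W` takes values in `ℝ₊`
    (∀ M : Mat, ∀ v : ℝ, 0 ≤ Wdens μ κ η M v) ∧
    -- `W` is of class `C^{1,1}_loc` (jointly in `(ε, v)`): it is `C¹` and its derivative is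
    -- locally Lipschitz
    ContDiff ℝ 1 (fun p : Mat × ℝ => Wdens μ κ η p.1 p.2) ∧
    (∀ K : Set (Mat × ℝ), IsCompact K → ∃ C : NNReal,
      LipschitzOnWith C (fderiv ℝ (fun p : Mat × ℝ => Wdens μ κ η p.1 p.2)) K) ∧
    -- `DWdens` is the partial derivative of `W` with respect to `ε` (directional derivatives
    -- along symmetric matrices)
    (∀ v : ℝ, ∀ M H : Mat, IsSym M → IsSym H →
      HasDerivAt (fun s : ℝ => Wdens μ κ η (M + s • H) v)
        (matInner (DWdens μ κ η M v) H) 0) ∧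
    -- `∂_ε W(0,v) = 0`
    (∀ v : ℝ, DWdens μ κ η 0 v = 0) ∧
    -- the quantitative monotonicity and Lipschitz estimates, with the consequence
    -- `|∂_ε W(ε,v)| ≤ C |ε|`
    (∃ c > (0 : ℝ), ∃ C > (0 : ℝ), ∀ v ∈ Set.Icc (0 : ℝ) 1, ∀ M₁ M₂ : Mat,
      IsSym M₁ → IsSym M₂ →
      (c * frobSq (M₁ - M₂) ≤
        matInner (DWdens μ κ η M₁ v - DWdens μ κ η M₂ v) (M₁ - M₂)) ∧
      frobNorm (DWdens μ κ η M₁ v - DWdens μ κ η M₂ v) ≤ C * frobNorm (M₁ - M₂) ∧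
      frobNorm (DWdens μ κ η M₁ v) ≤ C * frobNorm M₁) := by
  obtain ⟨hW, hW'⟩ := isC11Loc_Wdens μ κ η
  set C := 2 * (1 + η) * max μ κ
  have hC : 0 < C := by positivity
  have hlip (v : ℝ) (hv : v ∈ Set.Icc (0 : ℝ) 1) (M₁ M₂ : Mat) :
      frobNorm (DWdens μ κ η M₁ v - DWdens μ κ η M₂ v) ≤ C * frobNorm (M₁ - M₂) :=
    frobNorm_le_of_frobSq_le hC.le
      (frobSq_DWdens_sub_le hμ.le hκ.le hη.le (pow_le_one₀ hv.1 hv.2) M₁ M₂)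
  refine ⟨fun M v => ?_, hW,
    fun K hK => hW'.locallyLipschitzOn.exists_lipschitzOnWith_of_compact hK,
    fun v M H _ _ => hasDerivAt_Wdens_add_smul μ κ η M H v, DWdens_zero μ κ η,
    min (2 * η * μ) (2 * min η 1 * κ), by positivity, C, hC, fun v hv M₁ M₂ _ _ =>
    ⟨DWdens_strongMono hμ.le hκ.le M₁ M₂ v, hlip v hv M₁ M₂, ?_⟩⟩
  · unfold Wdens frobSq
    positivity
  · simpa [DWdens_zero] using hlip v hv M₁ 0
end
end

section
/- Let Υ^n := {t^n_k : k = 0,…,n} ⊂ [0,T] be the reparametrized discrete time sets, converging (along a subsequence) in the sense of Kuratowski to the compact set I_s ⊆ [0,T], and let (a,b) be a connected component of I_u := [0,T] \ I_s. Then there exists a sequence of indices k_n with t^n_{k_n} ∈ Υ^n such that t^n_{k_n} → a and t^n_{k_n + 1} → b as n → ∞. -/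
open MeasureTheory Filter Topology
open scoped RealInnerProductSpace

noncomputable section

/-- Points of the plane `ℝ²`. -/
abbrev Pt : Type := EuclideanSpace ℝ (Fin 2)

/-- The symmetric gradient `ε(u) = ½ (Du + Duᵀ)`. -/
def symGrad (u : Pt → Pt) (x : Pt) : Mat := fun i j =>
  (fderiv ℝ u x (EuclideanSpace.single j 1) i + fderiv ℝ u x (EuclideanSpace.single i 1) j) / 2

/-- The setting of the phase-field model: `Ω ⊂ ℝ²` bounded, connected, open; a Dirichlet part
`∂_D Ω` of the boundary; material constants `μ, κ, η, G_c > 0`; the exponent `q > 2`; a loading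
path `g(s) = α(s) ĝ` with `ĝ ∈ W^{1,q}(Ω;ℝ²)` and `α ∈ C¹([0,1])`. -/
structure PFSetting : Type where
  Ω : Set Pt
  DΩ : Set Pt
  μ : ℝ
  κ : ℝ
  η : ℝ
  Gc : ℝ
  q : ℝ
  ghat : Pt → Pt
  α : ℝ → ℝ
  hΩopen : IsOpen Ω
  hΩbdd : Bornology.IsBounded Ω
  hΩconn : IsConnected Ω
  hDΩ : DΩ ⊆ frontier Ω
  hμ : 0 < μ
  hκ : 0 < κ
  hη : 0 < η
  hGc : 0 < Gc
  hq : 2 < q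
  hα : ContDiffOn ℝ 1 α (Set.Icc 0 1)
  hghat_diff : ∀ x ∈ Ω, DifferentiableAt ℝ ghat x
  hghat_Lq : MemLp ghat (ENNReal.ofReal q) (volume.restrict Ω)
  hghat_dLq : MemLp (fun x => ‖fderiv ℝ ghat x‖) (ENNReal.ofReal q) (volume.restrict Ω)

namespace PFSetting

variable (S : PFSetting)

/-- `W₊(ε) = μ|ε_d|² + κ|ε_v⁺|² (+ δ)`; the parameter `δ ≥ 0` is the modification of §5
(take `δ = 0` for the standard phase-field energy). -/
def Wplus (δ : ℝ) (M : Mat) : ℝ := S.μ * frobSq (dev M) + S.κ * frobSq (volP M) + δ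

/-- `W₋(ε) = κ|ε_v⁻|²`. -/
def Wminus (M : Mat) : ℝ := S.κ * frobSq (volM M)

/-- Energy density `W(ε,v) = (v² + η) W₊(ε) + W₋(ε)`. -/
def Wd (δ : ℝ) (M : Mat) (v : ℝ) : ℝ := (v ^ 2 + S.η) * S.Wplus δ M + S.Wminus M

/-- Elastic energy `ℰ(u,v) = ∫_Ω W(ε(u), v) dx`. -/
def E (δ : ℝ) (u : Pt → Pt) (v : Pt → ℝ) : ℝ := ∫ x in S.Ω, S.Wd δ (symGrad u x) (v x)

/-- Dissipation `ℒ(v) = ½ ∫_Ω (v-1)² + |∇v|² dx`  (the `AT₂` functional). -/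
def L (v : Pt → ℝ) : ℝ := (1 / 2) * ∫ x in S.Ω, (v x - 1) ^ 2 + ‖gradient v x‖ ^ 2

/-- Total energy `ℱ = ℰ + G_c ℒ`. -/
def F (δ : ℝ) (u : Pt → Pt) (v : Pt → ℝ) : ℝ := S.E δ u v + S.Gc * S.L v

/-- `v ∈ H¹(Ω)` (surrogate). -/
def MemH1 (v : Pt → ℝ) : Prop :=
  (∀ x ∈ S.Ω, DifferentiableAt ℝ v x) ∧
  MemLp v 2 (volume.restrict S.Ω) ∧
  MemLp (fun x => ‖gradient v x‖) 2 (volume.restrict S.Ω)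

/-- `v ∈ 𝒱 = H¹(Ω) ∩ L^∞(Ω)`. -/
def MemV (v : Pt → ℝ) : Prop := S.MemH1 v ∧ ∃ C, ∀ x ∈ S.Ω, |v x| ≤ C

/-- `u ∈ H¹(Ω;ℝ²)` (surrogate). -/
def MemH1v (u : Pt → Pt) : Prop :=
  (∀ x ∈ S.Ω, DifferentiableAt ℝ u x) ∧
  MemLp u 2 (volume.restrict S.Ω) ∧
  MemLp (fun x => ‖fderiv ℝ u x‖) 2 (volume.restrict S.Ω)

/-- `u ∈ W^{1,p}(Ω;ℝ²)` (surrogate). -/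
def MemW1p (p : ℝ) (u : Pt → Pt) : Prop :=
  (∀ x ∈ S.Ω, DifferentiableAt ℝ u x) ∧
  MemLp u (ENNReal.ofReal p) (volume.restrict S.Ω) ∧
  MemLp (fun x => ‖fderiv ℝ u x‖) (ENNReal.ofReal p) (volume.restrict S.Ω)

/-- `u ∈ 𝒰(s)`: `H¹` displacements with `u = α(s) ĝ` on `∂_D Ω`. -/
def MemU (s : ℝ) (u : Pt → Pt) : Prop :=
  S.MemH1v u ∧ ∀ x ∈ S.DΩ, u x = S.α s • S.ghat x

/-- `ξ ∈ Ξ`: admissible (nonpositive) phase-field variations. -/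
def MemXi (ξ : Pt → ℝ) : Prop := S.MemV ξ ∧ ∀ x ∈ S.Ω, ξ x ≤ 0

/-- `φ ∈ Φ`: displacement variations vanishing on `∂_D Ω`. -/
def MemPhi (φ : Pt → Pt) : Prop := S.MemH1v φ ∧ ∀ x ∈ S.DΩ, φ x = 0

/-- `H¹(Ω)` norm. -/
def H1norm (v : Pt → ℝ) : ℝ := Real.sqrt (∫ x in S.Ω, (v x) ^ 2 + ‖gradient v x‖ ^ 2)

/-- `H¹(Ω;ℝ²)` norm. -/
def H1normV (u : Pt → Pt) : ℝ := Real.sqrt (∫ x in S.Ω, ‖u x‖ ^ 2 + ‖fderiv ℝ u x‖ ^ 2)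

/-- `W^{1,p}(Ω;ℝ²)` norm. -/
def W1pNorm (p : ℝ) (u : Pt → Pt) : ℝ :=
  (∫ x in S.Ω, ‖u x‖ ^ p + ‖fderiv ℝ u x‖ ^ p) ^ (1 / p)

/-- `L^r(Ω)` norm. -/
def LrNorm (r : ℝ) (v : Pt → ℝ) : ℝ := (∫ x in S.Ω, |v x| ^ r) ^ (1 / r)

/-- `u ∈ argmin { ℰ(·,v) : 𝒰(s) }`. -/
def IsElMin (δ s : ℝ) (v : Pt → ℝ) (u : Pt → Pt) : Prop :=
  S.MemU s u ∧ ∀ w, S.MemU s w → S.E δ u v ≤ S.E δ w v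

/-- `u ∈ argmin { ℱ(·,v) : 𝒰(s) }`. -/
def IsUMin (δ s : ℝ) (v : Pt → ℝ) (u : Pt → Pt) : Prop :=
  S.MemU s u ∧ ∀ w, S.MemU s w → S.F δ u v ≤ S.F δ w v

/-- `v ∈ argmin { ℱ(u,·) : v ∈ 𝒱, v ≤ vbar }`. -/
def IsVMin (δ : ℝ) (u : Pt → Pt) (vbar v : Pt → ℝ) : Prop :=
  S.MemV v ∧ (∀ x ∈ S.Ω, v x ≤ vbar x) ∧
  ∀ w, S.MemV w → (∀ x ∈ S.Ω, w x ≤ vbar x) → S.F δ u v ≤ S.F δ u w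

/-- Phase-field stress `σ(u,v) = 2ψ(v)(μ ε_d(u) + κ ε_v⁺(u)) - 2κ ε_v⁻(u)`. -/
def stress (u : Pt → Pt) (v : Pt → ℝ) (x : Pt) : Mat := fun i j =>
  2 * ((v x) ^ 2 + S.η) * (S.μ * dev (symGrad u x) i j + S.κ * volP (symGrad u x) i j)
    - 2 * S.κ * volM (symGrad u x) i j

/-- `∂_u ℱ(u,v)[φ] = ∫_Ω σ(u,v) : ε(φ) dx`. -/
def dFu (u : Pt → Pt) (v : Pt → ℝ) (φ : Pt → Pt) : ℝ :=
  ∫ x in S.Ω, matInner (S.stress u v x) (symGrad φ x)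

/-- `∂_v ℰ(u,v)[ξ] = ∫_Ω 2 v ξ W₊(ε(u)) dx`. -/
def dEv (δ : ℝ) (u : Pt → Pt) (v ξ : Pt → ℝ) : ℝ :=
  ∫ x in S.Ω, 2 * v x * ξ x * S.Wplus δ (symGrad u x)

/-- `dℒ(v)[ξ] = ∫_Ω (v-1) ξ + ∇v·∇ξ dx`. -/
def dL (v ξ : Pt → ℝ) : ℝ :=
  ∫ x in S.Ω, (v x - 1) * ξ x + ⟪gradient v x, gradient ξ x⟫

/-- `∂_v ℱ(u,v)[ξ] = ∂_v ℰ(u,v)[ξ] + G_c dℒ(v)[ξ]`. -/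
def dFv (δ : ℝ) (u : Pt → Pt) (v ξ : Pt → ℝ) : ℝ := S.dEv δ u v ξ + S.Gc * S.dL v ξ

/-- Reduced elastic energy `ℰ̃(s,v) = min { ℰ(u,v) : u ∈ 𝒰(s) }`. -/
def redE (δ s : ℝ) (v : Pt → ℝ) : ℝ := sInf {e | ∃ u, S.MemU s u ∧ e = S.E δ u v}

/-- `∂_v ℰ̃(t,v)[ξ] = ∫_Ω v ξ (W₊(ε(u_{t,v})) + δ) dx`, expressed through the elastic
minimizer `u = u_{t,v}` (paper's normalization). -/
def dredE (δ : ℝ) (u : Pt → Pt) (v ξ : Pt → ℝ) : ℝ :=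
  ∫ x in S.Ω, v x * ξ x * S.Wplus δ (symGrad u x)

/-- Maximal energy release rate
`𝒢_max(t,v) = sup { -∂_v ℰ̃(t,v)[ξ] : ξ ∈ Ξ, dℒ(v)[ξ] = 1 }`, expressed through the elastic
minimizer `u = u_{t,v}`. -/
def Gmax (δ : ℝ) (u : Pt → Pt) (v : Pt → ℝ) : ℝ :=
  sSup {g | ∃ ξ, S.MemXi ξ ∧ S.dL v ξ = 1 ∧ g = -(S.dredE δ u v ξ)}

/-- `H¹(Ω)` scalar product. -/
def H1inner (v w : Pt → ℝ) : ℝ :=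
  ∫ x in S.Ω, v x * w x + ⟪gradient v x, gradient w x⟫

/-- Weak `H¹(Ω)` convergence of a sequence. -/
def WeakH1Lim (vn : ℕ → Pt → ℝ) (v : Pt → ℝ) : Prop :=
  ∀ w, S.MemV w → Tendsto (fun n => S.H1inner (vn n) w) atTop (nhds (S.H1inner v w))

end PFSetting

/-- Kuratowski convergence of a sequence of subsets of `ℝ`: the Kuratowski lower limit
`Li A_n = {x : lim dist(x,A_n) = 0}` and upper limit `Ls A_n = {x : liminf dist(x,A_n) = 0}`
coincide with `I`. -/
def IsKuratowskiLimit (A : ℕ → Set ℝ) (I : Set ℝ) : Prop :=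
  I = {x | Filter.Tendsto (fun n => Metric.infDist x (A n)) Filter.atTop (nhds 0)} ∧
  I = {x | Filter.liminf (fun n => Metric.infDist x (A n)) Filter.atTop = 0}


/-- The whole package of the reparametrized time-discrete evolutions and of their
time-continuous limit: for each `n` the time-discrete separate minimizers `(u^n_k, v^n_k)`
at times `s^n_k = k/n`; the reparametrized times `t^n_k ∈ [0,T]`; the Lipschitz controls
`c^n` with `c^n(t^n_k) = k/n`; the reparametrized piecewise-affine interpolations `v^n(t)`,
uniformly Lipschitz with values in `H¹(Ω)`; the uniform limit `c` of `c^n`; the weak-* limit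
`v` of `v^n` (pointwise weak `H¹` limit) with a.e. time derivative `v̇`; the limit
displacement `u(t) = argmin {ℰ(·,v(t)) : 𝒰(c(t))}`; and the Kuratowski limit `I_s` of the
discrete time sets `Υ^n = {t^n_k}`. -/
structure LimitEvolution (S : PFSetting) (δ : ℝ) (v0 : Pt → ℝ) : Type where
  T : ℝ
  hT : 1 ≤ T
  uk : ℕ → ℕ → Pt → Pt
  vk : ℕ → ℕ → Pt → ℝ
  hvk0 : ∀ n : ℕ, vk n 0 = v0
  huk : ∀ n : ℕ, 0 < n → ∀ k ≤ n, S.IsUMin δ ((k : ℝ) / n) (vk n k) (uk n k)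
  hvkmin : ∀ n : ℕ, 0 < n → ∀ k < n, S.IsVMin δ (uk n (k + 1)) (vk n k) (vk n (k + 1))
  tk : ℕ → ℕ → ℝ
  htk0 : ∀ n : ℕ, tk n 0 = 0
  htkT : ∀ n : ℕ, 0 < n → tk n n = T
  htkmono : ∀ n : ℕ, 0 < n → ∀ k < n, tk n k < tk n (k + 1)
  htkgap : ∃ B > (0 : ℝ), ∀ n : ℕ, 0 < n → ∀ k < n, 1 / (B * n) ≤ tk n (k + 1) - tk n k
  cn : ℕ → ℝ → ℝ
  hcnval : ∀ n : ℕ, 0 < n → ∀ k ≤ n, cn n (tk n k) = (k : ℝ) / n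
  hcnmono : ∀ n : ℕ, MonotoneOn (cn n) (Set.Icc 0 T)
  hcnlip : ∃ K : NNReal, ∀ n : ℕ, LipschitzOnWith K (cn n) (Set.Icc 0 T)
  vfun : ℕ → ℝ → Pt → ℝ
  hvfun : ∀ n : ℕ, 0 < n → ∀ k < n, ∀ t ∈ Set.Icc (tk n k) (tk n (k + 1)),
    vfun n t = fun x =>
      vk n k x + ((t - tk n k) / (tk n (k + 1) - tk n k)) * (vk n (k + 1) x - vk n k x)
  hvlip : ∃ M : ℝ, ∀ n : ℕ, 0 < n → ∀ t₁ ∈ Set.Icc (0 : ℝ) T, ∀ t₂ ∈ Set.Icc (0 : ℝ) T,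
    S.H1norm (vfun n t₁ - vfun n t₂) ≤ M * |t₁ - t₂|
  c : ℝ → ℝ
  hcconv : TendstoUniformlyOn cn c atTop (Set.Icc 0 T)
  v : ℝ → Pt → ℝ
  hvconv : ∀ t ∈ Set.Icc (0 : ℝ) T, S.WeakH1Lim (fun n => vfun n t) (v t)
  u : ℝ → Pt → Pt
  humin : ∀ t ∈ Set.Icc (0 : ℝ) T, S.IsElMin δ (c t) (v t) (u t)
  Is : Set ℝ
  hIsKur : IsKuratowskiLimit (fun n => {x | ∃ k ≤ n, x = tk n k}) Is
  vdot : ℝ → Pt → ℝ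
  hvdot : ∀ᵐ t ∂(volume.restrict (Set.Icc (0 : ℝ) T)),
    Filter.Tendsto (fun h : ℝ => S.H1norm (fun x => (v (t + h) x - v t x) / h - vdot t x))
      (nhdsWithin 0 {(0 : ℝ)}ᶜ) (nhds 0)

/-- The unstable set `I_u = [0,T] \ I_s`. -/
def LimitEvolution.Iu {S : PFSetting} {δ : ℝ} {v0 : Pt → ℝ} (Ev : LimitEvolution S δ v0) :
    Set ℝ := Set.Icc 0 Ev.T \ Ev.Is

/-! Fix a point `m` of the gap `(a,b)` and let `t_{k_n}` be the last discrete time before `m`, so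
that `t_{k_n + 1}` is the first one after it. A point of `Υ^n` close to `a` lies below `m`, hence
below `t_{k_n}`; conversely a cluster point of the `t_{k_n}` in `[a + ε, m]` would lie in the
upper Kuratowski limit `I_s`, which misses `(a,b)`. Hence `t_{k_n} → a`, and symmetrically
`t_{k_n + 1} → b`. -/

section DiscreteTimes

variable {α : Type*} [LinearOrder α]

theorem Nat.exists_lt_le_succ {f : ℕ → α} {m : α} {N : ℕ} (h0 : f 0 < m) (hN : m ≤ f N) :
    ∃ k < N, f k < m ∧ m ≤ f (k + 1) := by
  obtain ⟨N, rfl⟩ : ∃ N', N = N' + 1 :=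
    Nat.exists_eq_succ_of_ne_zero (by rintro rfl; exact (h0.trans_le hN).false)
  have hex : ∃ k, m ≤ f (k + 1) := ⟨N, hN⟩
  refine ⟨Nat.find hex, Nat.lt_succ_of_le (Nat.find_min' hex hN), ?_, Nat.find_spec hex⟩
  cases h : Nat.find hex with
  | zero => exact h0
  | succ j => exact not_le.1 (Nat.find_min hex (by omega))

variable {f : ℕ → α} {N k : ℕ} {m : α}

theorem StrictMonoOn.isGreatest_inter_Iio (hf : StrictMonoOn f (Set.Iic N)) (hk : k < N)
    (hkm : f k < m) (hmk : m ≤ f (k + 1)) :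
    IsGreatest ({x | ∃ j ≤ N, x = f j} ∩ Set.Iio m) (f k) := by
  refine ⟨⟨⟨k, hk.le, rfl⟩, hkm⟩, ?_⟩
  rintro _ ⟨⟨j, hj, rfl⟩, hjm⟩
  have hjk : j < k + 1 := (hf.lt_iff_lt hj (Set.mem_Iic.2 hk)).1 (hjm.trans_le hmk)
  exact hf.monotoneOn hj (Set.mem_Iic.2 hk.le) (Nat.lt_succ_iff.1 hjk)

theorem StrictMonoOn.isLeast_inter_Ici (hf : StrictMonoOn f (Set.Iic N)) (hk : k < N)
    (hkm : f k < m) (hmk : m ≤ f (k + 1)) :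
    IsLeast ({x | ∃ j ≤ N, x = f j} ∩ Set.Ici m) (f (k + 1)) := by
  refine ⟨⟨⟨k + 1, hk, rfl⟩, hmk⟩, ?_⟩
  rintro _ ⟨⟨j, hj, rfl⟩, hjm⟩
  have hkj : k < j := (hf.lt_iff_lt (Set.mem_Iic.2 hk.le) hj).1 (hkm.trans_le hjm)
  exact hf.monotoneOn (Set.mem_Iic.2 hk) hj hkj

end DiscreteTimes

namespace IsKuratowskiLimit

open Metric

variable {A : ℕ → Set ℝ} {I : Set ℝ}

theorem eventually_inter_nonempty (hK : IsKuratowskiLimit A I) (hA : ∀ n, (A n).Nonempty)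
    {x : ℝ} (hx : x ∈ I) {s : Set ℝ} (hs : s ∈ 𝓝 x) : ∀ᶠ n in atTop, (A n ∩ s).Nonempty := by
  obtain ⟨ε, hε, hball⟩ := Metric.mem_nhds_iff.1 hs
  have hdist : Tendsto (fun n => infDist x (A n)) atTop (𝓝 0) := by
    rw [hK.1] at hx
    exact hx
  filter_upwards [hdist.eventually_lt_const hε] with n hn
  obtain ⟨z, hzA, hz⟩ := (infDist_lt_iff (hA n)).1 hn
  exact ⟨z, hzA, hball (mem_ball_comm.1 hz)⟩

theorem mem_of_frequently_infDist_lt (hK : IsKuratowskiLimit A I) {x : ℝ}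
    (h : ∀ ε > 0, ∃ᶠ n in atTop, infDist x (A n) < ε) : x ∈ I := by
  rw [hK.2]
  have hcobdd : IsCoboundedUnder (· ≥ ·) atTop (fun n => infDist x (A n)) :=
    ⟨1, fun c hc => ((h 1 one_pos).and_eventually hc).exists.elim fun _ hn => hn.2.trans hn.1.le⟩
  refine le_antisymm (le_of_forall_pos_le_add fun ε hε => ?_)
    (le_liminf_of_le hcobdd (Eventually.of_forall fun _ => infDist_nonneg))
  rw [zero_add]
  exact liminf_le_of_frequently_le ((h ε hε).mono fun _ hn => hn.le)
    (isBoundedUnder_of ⟨0, fun _ => infDist_nonneg⟩)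

theorem eventually_notMem_of_disjoint (hK : IsKuratowskiLimit A I) {K : Set ℝ}
    (hKc : IsCompact K) (hKI : Disjoint K I) {y : ℕ → ℝ} (hy : ∀ᶠ n in atTop, y n ∈ A n) :
    ∀ᶠ n in atTop, y n ∉ K := by
  by_contra hfreq
  rw [not_eventually] at hfreq
  simp only [not_not] at hfreq
  obtain ⟨c, hcK, hc⟩ := hKc.exists_mapClusterPt_of_frequently hfreq
  refine hKI.notMem_of_mem_left hcK (hK.mem_of_frequently_infDist_lt fun ε hε => ?_)
  refine ((mapClusterPt_iff_frequently.1 hc _ (ball_mem_nhds c hε)).and_eventually hy).mono ?_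
  rintro n ⟨hnc, hnA⟩
  exact (infDist_le_dist_of_mem hnA).trans_lt (mem_ball'.1 hnc)

theorem tendsto_of_isGreatest (hK : IsKuratowskiLimit A I) (hA : ∀ n, (A n).Nonempty)
    {a m : ℝ} (ha : a ∈ I) (ham : a < m) (hI : Disjoint (Set.Ioc a m) I) {x : ℕ → ℝ}
    (hx : ∀ᶠ n in atTop, IsGreatest (A n ∩ Set.Iio m) (x n)) : Tendsto x atTop (𝓝 a) := by
  refine tendsto_order.2 ⟨fun l hl => ?_, fun r hr => ?_⟩
  · filter_upwards [hK.eventually_inter_nonempty hA ha (Ioo_mem_nhds hl ham), hx]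
      with n ⟨z, hzA, hz⟩ hxn
    exact hz.1.trans_le (hxn.2 ⟨hzA, hz.2⟩)
  · have hKI : Disjoint (Set.Icc r m) I := hI.mono_left (Set.Icc_subset_Ioc_left hr)
    filter_upwards [hK.eventually_notMem_of_disjoint isCompact_Icc hKI (hx.mono fun _ h => h.1.1),
      hx] with n hn hxn
    exact lt_of_not_ge fun h => hn ⟨h, hxn.1.2.le⟩

theorem tendsto_of_isLeast (hK : IsKuratowskiLimit A I) (hA : ∀ n, (A n).Nonempty)
    {b m : ℝ} (hb : b ∈ I) (hmb : m < b) (hI : Disjoint (Set.Ico m b) I) {y : ℕ → ℝ}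
    (hy : ∀ᶠ n in atTop, IsLeast (A n ∩ Set.Ici m) (y n)) : Tendsto y atTop (𝓝 b) := by
  refine tendsto_order.2 ⟨fun l hl => ?_, fun r hr => ?_⟩
  · have hKI : Disjoint (Set.Icc m l) I :=
      hI.mono_left fun _ hz => Set.mem_Ico.2 ⟨hz.1, hz.2.trans_lt hl⟩
    filter_upwards [hK.eventually_notMem_of_disjoint isCompact_Icc hKI (hy.mono fun _ h => h.1.1),
      hy] with n hn hyn
    exact lt_of_not_ge fun h => hn ⟨hyn.1.2, h⟩
  · filter_upwards [hK.eventually_inter_nonempty hA hb (Ioo_mem_nhds hmb hr), hy]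
      with n ⟨z, hzA, hz⟩ hyn
    exact (hyn.2 ⟨hzA, hz.1.le⟩).trans_lt hz.2

end IsKuratowskiLimit

theorem stmt8_general (S : PFSetting) (v0 : Pt → ℝ)
    (Ev : LimitEvolution S 0 v0)
    (a b : ℝ) (hab : a < b) (ha : a ∈ Ev.Is) (hb : b ∈ Ev.Is)
    (hcomp : Set.Ioo a b ⊆ Ev.Iu) :
    ∃ kn : ℕ → ℕ, (∀ n : ℕ, 0 < n → kn n < n) ∧
      Tendsto (fun n => Ev.tk n (kn n)) atTop (nhds a) ∧
      Tendsto (fun n => Ev.tk n (kn n + 1)) atTop (nhds b) := by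
  have hA : ∀ n, ({x | ∃ k ≤ n, x = Ev.tk n k} : Set ℝ).Nonempty :=
    fun n => ⟨0, 0, n.zero_le, (Ev.htk0 n).symm⟩
  have hgap : Disjoint (Set.Ioo a b) Ev.Is := Set.disjoint_left.2 fun _ hc => (hcomp hc).2
  have hIcc : Set.Icc a b ⊆ Set.Icc 0 Ev.T := by
    simpa only [closure_Ioo hab.ne, closure_Icc] using closure_mono (hcomp.trans Set.sdiff_subset)
  obtain ⟨ha0, hbT⟩ := (Set.Icc_subset_Icc_iff hab.le).1 hIcc
  obtain ⟨m, ham, hmb⟩ := exists_between hab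
  have hbracket : ∀ n, 0 < n → ∃ k < n, Ev.tk n k < m ∧ m ≤ Ev.tk n (k + 1) := fun n hn =>
    Nat.exists_lt_le_succ (by rw [Ev.htk0]; linarith) (by rw [Ev.htkT n hn]; linarith)
  choose! kn hkn using hbracket
  have hmono : ∀ n, 0 < n → StrictMonoOn (Ev.tk n) (Set.Iic n) := fun n hn =>
    strictMonoOn_Iic_of_lt_succ (Ev.htkmono n hn)
  refine ⟨kn, fun n hn => (hkn n hn).1, ?_, ?_⟩
  · refine Ev.hIsKur.tendsto_of_isGreatest hA ha ham
      (hgap.mono_left (Set.Ioc_subset_Ioo_right hmb)) ?_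
    filter_upwards [eventually_gt_atTop 0] with n hn
    exact (hmono n hn).isGreatest_inter_Iio (hkn n hn).1 (hkn n hn).2.1 (hkn n hn).2.2
  · refine Ev.hIsKur.tendsto_of_isLeast hA hb hmb
      (hgap.mono_left (Set.Ico_subset_Ioo_left ham)) ?_
    filter_upwards [eventually_gt_atTop 0] with n hn
    exact (hmono n hn).isLeast_inter_Ici (hkn n hn).1 (hkn n hn).2.1 (hkn n hn).2.2

/-- Lemma 4.9 of the paper.  Let `Υ^n = {t^n_k}` converge in the sense of
Kuratowski to `I_s` and let `(a,b)` be a connected component of `I_u = [0,T] \ I_s`.  Then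
there are indices `k_n` with `t^n_{k_n} → a` and `t^n_{k_n + 1} → b`. -/
theorem stmt8 (S : PFSetting) (v0 : Pt → ℝ) (hv0 : S.MemV v0)
    (hv01 : ∀ x ∈ S.Ω, 0 ≤ v0 x ∧ v0 x ≤ 1)
    (Ev : LimitEvolution S 0 v0)
    (a b : ℝ) (hab : a < b) (ha : a ∈ Ev.Is) (hb : b ∈ Ev.Is)
    (hcomp : Set.Ioo a b ⊆ Ev.Iu) :
    ∃ kn : ℕ → ℕ, (∀ n : ℕ, 0 < n → kn n < n) ∧
      Tendsto (fun n => Ev.tk n (kn n)) atTop (nhds a) ∧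
      Tendsto (fun n => Ev.tk n (kn n + 1)) atTop (nhds b) :=
  stmt8_general S v0 Ev a b hab ha hb hcomp
end
end

section
/- The limit parametrization c : [0,T] → [0,1] (the uniform limit of the parametrizations c^n) is constant on each connected component of the unstable set I_u. -/
open MeasureTheory Filter Topology
open scoped RealInnerProductSpace

noncomputable section

/-! If `c s₁ < c s₂`, then for large `n` the increment `c^n(s₂) - c^n(s₁)` exceeds the grid step
`1/n`, so some value `k/n = c^n(t^n_k)` lies strictly between `c^n(s₁)` and `c^n(s₂)`, and by
monotonicity of `c^n` the node `t^n_k` lies in `(s₁, s₂)`. By compactness of `[s₁, s₂]` these nodes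
accumulate at some `τ ∈ [s₁, s₂]`, whose distance to `Υ^n` then has `liminf` zero, i.e. `τ ∈ I_s`.
So `c` cannot increase on an interval contained in `I_u`. -/

open Set Metric

lemma exists_nat_div_mem_Ioo {x y : ℝ} {n : ℕ} (hn : 0 < n) (hx : 0 ≤ x) (hxy : 1 / n < y - x) :
    ∃ k : ℕ, (k : ℝ) / n ∈ Ioo x y := by
  have hn' : (0 : ℝ) < n := Nat.cast_pos.mpr hn
  refine ⟨⌊n * x⌋₊ + 1, ?_, ?_⟩
  · rw [lt_div_iff₀ hn', mul_comm]
    exact_mod_cast Nat.lt_floor_add_one (n * x)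
  · have hfloor : (⌊n * x⌋₊ : ℝ) ≤ n * x := Nat.floor_le (by positivity)
    have hstep : 1 < n * (y - x) := by rwa [div_lt_iff₀ hn', mul_comm] at hxy
    rw [div_lt_iff₀ hn']
    push_cast
    nlinarith

lemma Filter.liminf_eq_zero_of_frequently_lt {ι : Type*} {l : Filter ι} {u : ι → ℝ}
    (h0 : ∀ i, 0 ≤ u i) (h : ∀ ε > 0, ∃ᶠ i in l, u i < ε) : liminf u l = 0 := by
  refine le_antisymm (le_of_forall_pos_le_add fun ε hε => ?_) ?_
  · rw [zero_add]
    exact liminf_le_of_frequently_le ((h ε hε).mono fun _ => le_of_lt) (isBoundedUnder_of ⟨0, h0⟩)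
  · exact le_liminf_of_le (IsCoboundedUnder.of_frequently_le ((h 1 one_pos).mono fun _ => le_of_lt))
      (Eventually.of_forall h0)

lemma IsCompact.exists_liminf_infDist_eq_zero {ι α : Type*} [PseudoMetricSpace α] {l : Filter ι}
    {A : ι → Set α} {K : Set α} (hK : IsCompact K) (h : ∃ᶠ i in l, (A i ∩ K).Nonempty) :
    ∃ τ ∈ K, liminf (fun i => infDist τ (A i)) l = 0 := by
  classical
  obtain ⟨-, y₀, -⟩ := h.exists
  set x : ι → α := fun i => if hi : (A i ∩ K).Nonempty then hi.some else y₀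
  have hx : ∃ᶠ i in l, x i ∈ A i ∧ x i ∈ K :=
    h.mono fun i hi => by simp only [x, dif_pos hi]; exact hi.some_mem
  obtain ⟨τ, hτK, hτ⟩ := hK.exists_mapClusterPt_of_frequently
    (l := l ⊓ 𝓟 {i | x i ∈ A i}) (frequently_inf_principal.mpr hx)
  refine ⟨τ, hτK, liminf_eq_zero_of_frequently_lt (fun _ => infDist_nonneg) fun ε hε => ?_⟩
  have hnear := frequently_inf_principal.mp (hτ.frequently (ball_mem_nhds τ hε))
  exact hnear.mono fun i (hi : x i ∈ A i ∧ x i ∈ ball τ ε) =>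
    (infDist_le_dist_of_mem hi.1).trans_lt (mem_ball'.mp hi.2)

namespace LimitEvolution

variable {S : PFSetting} {δ : ℝ} {v0 : Pt → ℝ} (Ev : LimitEvolution S δ v0) {n k : ℕ}

lemma tk_monotoneOn (hn : 0 < n) : MonotoneOn (Ev.tk n) (Iic n) :=
  (strictMonoOn_Iic_of_lt_succ fun k hk => Ev.htkmono n hn k hk).monotoneOn

lemma tk_mem_Icc (hn : 0 < n) (hk : k ≤ n) : Ev.tk n k ∈ Icc 0 Ev.T := by
  refine ⟨?_, ?_⟩
  · simpa only [Ev.htk0] using Ev.tk_monotoneOn hn (Nat.zero_le n) hk (Nat.zero_le k)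
  · simpa only [Ev.htkT n hn] using Ev.tk_monotoneOn hn hk self_mem_Iic hk

lemma cn_mem_Icc (hn : 0 < n) {t : ℝ} (ht : t ∈ Icc 0 Ev.T) : Ev.cn n t ∈ Icc 0 1 := by
  have h0 : Ev.cn n 0 = 0 := by simpa [Ev.htk0] using Ev.hcnval n hn 0 (Nat.zero_le n)
  have h1 : Ev.cn n Ev.T = 1 := by
    simpa [Ev.htkT n hn, (Nat.cast_pos.mpr hn).ne'] using Ev.hcnval n hn n le_rfl
  have hT : (0 : ℝ) ≤ Ev.T := zero_le_one.trans Ev.hT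
  refine ⟨?_, ?_⟩
  · simpa only [h0] using Ev.hcnmono n ⟨le_rfl, hT⟩ ht ht.1
  · simpa only [h1] using Ev.hcnmono n ht ⟨hT, le_rfl⟩ ht.2

lemma c_monotoneOn : MonotoneOn Ev.c (Icc 0 Ev.T) :=
  monotoneOn_of_frequently_monotoneOn_of_tendsto (Frequently.of_forall Ev.hcnmono)
    fun _ ht => Ev.hcconv.tendsto_at ht

lemma eventually_exists_tk_mem_Ioo {s₁ s₂ : ℝ} (hs₁ : s₁ ∈ Icc 0 Ev.T) (hs₂ : s₂ ∈ Icc 0 Ev.T)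
    (hc : Ev.c s₁ < Ev.c s₂) : ∀ᶠ n in atTop, ∃ k ≤ n, Ev.tk n k ∈ Ioo s₁ s₂ := by
  have hgap : Tendsto (fun n : ℕ => Ev.cn n s₂ - Ev.cn n s₁ - 1 / n) atTop
      (𝓝 (Ev.c s₂ - Ev.c s₁ - 0)) :=
    ((Ev.hcconv.tendsto_at hs₂).sub (Ev.hcconv.tendsto_at hs₁)).sub
      tendsto_one_div_atTop_nhds_zero_nat
  filter_upwards [hgap.eventually_const_lt (u := 0) (by linarith), eventually_gt_atTop 0]
    with n hn hn0
  obtain ⟨k, hk₁, hk₂⟩ := exists_nat_div_mem_Ioo (y := Ev.cn n s₂) hn0 (Ev.cn_mem_Icc hn0 hs₁).1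
    (by linarith)
  have hkn : k ≤ n := by
    have hk1 : (k : ℝ) / n < 1 := hk₂.trans_le (Ev.cn_mem_Icc hn0 hs₂).2
    rw [div_lt_one (Nat.cast_pos.mpr hn0)] at hk1
    exact_mod_cast hk1.le
  have htk := Ev.tk_mem_Icc hn0 hkn
  rw [← Ev.hcnval n hn0 k hkn] at hk₁ hk₂
  exact ⟨k, hkn, (Ev.hcnmono n).reflect_lt hs₁ htk hk₁, (Ev.hcnmono n).reflect_lt htk hs₂ hk₂⟩

lemma exists_mem_Is_of_c_lt {s₁ s₂ : ℝ} (hs₁ : s₁ ∈ Icc 0 Ev.T) (hs₂ : s₂ ∈ Icc 0 Ev.T)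
    (hc : Ev.c s₁ < Ev.c s₂) : ∃ τ ∈ Icc s₁ s₂, τ ∈ Ev.Is := by
  have hmeet : ∃ᶠ n in atTop, ({x | ∃ k ≤ n, x = Ev.tk n k} ∩ Icc s₁ s₂).Nonempty :=
    (Ev.eventually_exists_tk_mem_Ioo hs₁ hs₂ hc).frequently.mono
      fun n ⟨k, hk, hmem⟩ => ⟨Ev.tk n k, ⟨k, hk, rfl⟩, Ioo_subset_Icc_self hmem⟩
  obtain ⟨τ, hτ, hliminf⟩ := isCompact_Icc.exists_liminf_infDist_eq_zero hmeet
  exact ⟨τ, hτ, Ev.hIsKur.2 ▸ hliminf⟩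

lemma c_eq_of_uIcc_subset_Iu {s₁ s₂ : ℝ} (h : uIcc s₁ s₂ ⊆ Ev.Iu) : Ev.c s₁ = Ev.c s₂ := by
  wlog hs : s₁ ≤ s₂ generalizing s₁ s₂
  · exact (this (uIcc_comm s₁ s₂ ▸ h) (le_of_not_ge hs)).symm
  rw [uIcc_of_le hs] at h
  have hs₁ := (h (left_mem_Icc.mpr hs)).1
  have hs₂ := (h (right_mem_Icc.mpr hs)).1
  refine (Ev.c_monotoneOn hs₁ hs₂ hs).eq_of_not_lt fun hc => ?_
  obtain ⟨τ, hτ, hτIs⟩ := Ev.exists_mem_Is_of_c_lt hs₁ hs₂ hc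
  exact (h hτ).2 hτIs

end LimitEvolution

theorem stmt9_general (S : PFSetting) (v0 : Pt → ℝ)
    (Ev : LimitEvolution S 0 v0) :
    ∀ a b : ℝ, a < b → a ∈ Ev.Is → b ∈ Ev.Is → Set.Ioo a b ⊆ Ev.Iu →
      ∀ t₁ ∈ Set.Ioo a b, ∀ t₂ ∈ Set.Ioo a b, Ev.c t₁ = Ev.c t₂ := by
  intro a b _ _ _ hIu t₁ ht₁ t₂ ht₂
  exact Ev.c_eq_of_uIcc_subset_Iu ((ordConnected_Ioo.uIcc_subset ht₁ ht₂).trans hIu)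

/-- Lemma 4.10 of the paper.  The limit parametrization `c` (uniform limit
of the `c^n`) is constant on each connected component `(a,b)` of the unstable set
`I_u = [0,T] \ I_s`. -/
theorem stmt9 (S : PFSetting) (v0 : Pt → ℝ) (hv0 : S.MemV v0)
    (hv01 : ∀ x ∈ S.Ω, 0 ≤ v0 x ∧ v0 x ≤ 1)
    (Ev : LimitEvolution S 0 v0) :
    ∀ a b : ℝ, a < b → a ∈ Ev.Is → b ∈ Ev.Is → Set.Ioo a b ⊆ Ev.Iu →
      ∀ t₁ ∈ Set.Ioo a b, ∀ t₂ ∈ Set.Ioo a b, Ev.c t₁ = Ev.c t₂ :=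
  stmt9_general S v0 Ev
end
end
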